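/- arXiv:2510.24593 — 2 statements merged into one kernel-verified Lean document; each statement's English description precedes it below -/
import Mathlib

section
/- For all integers d ≥ 2, n ≥ 3 and m ≥ 0, the determinant of the metric tensor matrix G^m(v) is bounded above by a rational function of the edge lengths whose denominator only has factors of the prescribed form: there exist a real polynomial P in n variables X_0, …, X_{n-1} and a polynomial Q that is a finite product of factors, each of the form X_i, X_i + X_{i-1 (mod n)}, or X_0 + ⋯ + X_{n-1}, such that for every v ∈ ℝ_*^{d×n} one has Q(|e_0(v)|, …, |e_{n-1}(v)|) > 0 and det G^m(v) ≤ P(|e_0(v)|, …, |e_{n-1}(v)|) / Q(|e_0(v)|, …, |e_{n-1}(v)|). -/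
open scoped InnerProductSpace BigOperators
open MeasureTheory Filter Topology

noncomputable section

/-- Euclidean space ℝ^d. -/
abbrev Vec (d : ℕ) := EuclideanSpace ℝ (Fin d)

variable {d n : ℕ}

/-- Edges of the discrete closed curve: `e i (v) = v (i+1) - v i`. -/
def edge (v : ZMod n → Vec d) (i : ZMod n) : Vec d := v (i + 1) - v i

/-- Discrete regularity: adjacent vertices are distinct. -/
def IsReg (v : ZMod n → Vec d) : Prop := ∀ i, v i ≠ v (i + 1)

/-- Total length of the discrete curve. -/
def len [NeZero n] (v : ZMod n → Vec d) : ℝ := ∑ i, ‖edge v i‖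

/-- Discrete arc-length derivative of order `m`: odd orders use forward differences
divided by `|e_i|`, even (positive) orders use backward differences divided by the
averaged edge length. -/
def Ds (v h : ZMod n → Vec d) : ℕ → ZMod n → Vec d
  | 0 => h
  | (m + 1) => fun i =>
    if (m + 1) % 2 = 1 then
      (‖edge v i‖)⁻¹ • (Ds v h m (i + 1) - Ds v h m i)
    else
      ((‖edge v i‖ + ‖edge v (i - 1)‖) / 2)⁻¹ • (Ds v h m i - Ds v h m (i - 1))

/-- The weights μ_i in the higher-order term. -/
def mu (v : ZMod n → Vec d) (m : ℕ) (i : ZMod n) : ℝ :=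
  if m % 2 = 1 then ‖edge v i‖ else (‖edge v i‖ + ‖edge v (i - 1)‖) / 2

/-- The discrete Sobolev-type metric of order `m`. -/
def gMet [NeZero n] (m : ℕ) (v h k : ZMod n → Vec d) : ℝ :=
  ∑ i, (⟪h i, k i⟫_ℝ / len v ^ 3 * ((‖edge v i‖ + ‖edge v (i - 1)‖) / 2)
    + ⟪Ds v h m i, Ds v k m i⟫_ℝ / len v ^ ((3 : ℤ) - 2 * (m : ℤ)) * mu v m i)

/-- Standard basis vectors of (ℝ^d)^n. -/
def stdB (a : Fin d) (i : ZMod n) : ZMod n → Vec d :=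
  fun j => if j = i then EuclideanSpace.single a 1 else 0

/-- The (dn)×(dn) metric tensor matrix of g^m in the standard basis. -/
def metricMatrix [NeZero n] (m : ℕ) (v : ZMod n → Vec d) :
    Matrix (Fin d × ZMod n) (Fin d × ZMod n) ℝ :=
  Matrix.of fun p q => gMet m v (stdB p.1 p.2) (stdB q.1 q.2)

/-!
Every entry of `G^m(v)` is a sum of `n` terms. The zeroth-order ones are at most `1 / L²`; in the
top-order ones each discrete derivative divides a difference by a length whose inverse is at most
`A = ∑ᵢ (1 / |eᵢ| + 2 / (|eᵢ| + |eᵢ₋₁|))`, so they are at most `(2 A L)^{2m} / L²`.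
The Leibniz expansion then gives `det G^m(v) ≤ N! E^N` with `N = dn` and
`E = n (1 + (2 A L)^{2m}) / L²`. This `E` is built from polynomials and reciprocals of `Xᵢ`,
`Xᵢ + Xᵢ₋₁` and `∑ Xᵢ` by sums and products, and such expressions are quotients `P / Q` with `Q`
a product of those factors.
-/

lemma norm_edge_pos {v : ZMod n → Vec d} (hv : IsReg v) (i : ZMod n) : 0 < ‖edge v i‖ :=
  norm_pos_iff.2 (sub_ne_zero.2 (hv i).symm)

lemma norm_Ds_le {v h : ZMod n → Vec d} {B C : ℝ} (hB : ∀ j, ‖h j‖ ≤ B)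
    (hfwd : ∀ i, ‖edge v i‖⁻¹ ≤ C) (hbwd : ∀ i, ((‖edge v i‖ + ‖edge v (i - 1)‖) / 2)⁻¹ ≤ C)
    (m : ℕ) (i : ZMod n) : ‖Ds v h m i‖ ≤ (2 * C) ^ m * B := by
  have hC : 0 ≤ C := (inv_nonneg.2 (norm_nonneg _)).trans (hfwd 0)
  induction m generalizing i with
  | zero => simpa [Ds] using hB i
  | succ m ih =>
    have step : ∀ c : ℝ, 0 ≤ c → c⁻¹ ≤ C → ∀ x y : ZMod n,
        ‖c⁻¹ • (Ds v h m x - Ds v h m y)‖ ≤ (2 * C) ^ (m + 1) * B := by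
      intro c hc hcC x y
      rw [norm_smul, Real.norm_of_nonneg (inv_nonneg.2 hc)]
      calc c⁻¹ * ‖Ds v h m x - Ds v h m y‖
          ≤ C * (‖Ds v h m x‖ + ‖Ds v h m y‖) :=
            mul_le_mul hcC (norm_sub_le _ _) (norm_nonneg _) hC
        _ ≤ C * ((2 * C) ^ m * B + (2 * C) ^ m * B) := by gcongr <;> apply ih
        _ = (2 * C) ^ (m + 1) * B := by ring
    simp only [Ds]
    split_ifs
    · exact step _ (norm_nonneg _) (hfwd i) _ _
    · exact step _ (by positivity) (hbwd i) _ _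

lemma abs_inner_Ds_le {v h k : ZMod n → Vec d} {C : ℝ} (hh : ∀ j, ‖h j‖ ≤ 1)
    (hk : ∀ j, ‖k j‖ ≤ 1) (hfwd : ∀ i, ‖edge v i‖⁻¹ ≤ C)
    (hbwd : ∀ i, ((‖edge v i‖ + ‖edge v (i - 1)‖) / 2)⁻¹ ≤ C) (m : ℕ) (i : ZMod n) :
    |⟪Ds v h m i, Ds v k m i⟫_ℝ| ≤ (2 * C) ^ (2 * m) := by
  have hDh := norm_Ds_le hh hfwd hbwd m i
  have hDk := norm_Ds_le hk hfwd hbwd m i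
  rw [mul_one] at hDh hDk
  calc |⟪Ds v h m i, Ds v k m i⟫_ℝ| ≤ ‖Ds v h m i‖ * ‖Ds v k m i‖ := abs_real_inner_le_norm _ _
    _ ≤ (2 * C) ^ m * (2 * C) ^ m := mul_le_mul hDh hDk (norm_nonneg _) ((norm_nonneg _).trans hDh)
    _ = (2 * C) ^ (2 * m) := by ring

lemma mu_nonneg (v : ZMod n → Vec d) (m : ℕ) (i : ZMod n) : 0 ≤ mu v m i := by
  unfold mu
  split_ifs <;> positivity

lemma norm_stdB_le (a : Fin d) (i j : ZMod n) : ‖stdB a i j‖ ≤ 1 := by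
  unfold stdB
  split_ifs <;> simp

section Metric

variable [NeZero n]

lemma norm_edge_le_len (v : ZMod n → Vec d) (i : ZMod n) : ‖edge v i‖ ≤ len v :=
  Finset.single_le_sum (fun j _ => norm_nonneg (edge v j)) (Finset.mem_univ i)

lemma len_pos {v : ZMod n → Vec d} (hv : IsReg v) : 0 < len v :=
  Finset.sum_pos (fun i _ => norm_edge_pos hv i) Finset.univ_nonempty

lemma avg_edge_le_len (v : ZMod n → Vec d) (i : ZMod n) :
    (‖edge v i‖ + ‖edge v (i - 1)‖) / 2 ≤ len v := by
  linarith [norm_edge_le_len v i, norm_edge_le_len v (i - 1)]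

lemma mu_le_len (v : ZMod n → Vec d) (m : ℕ) (i : ZMod n) : mu v m i ≤ len v := by
  unfold mu
  split_ifs
  exacts [norm_edge_le_len v i, avg_edge_le_len v i]

lemma abs_gMet_le {m : ℕ} {v h k : ZMod n → Vec d} (hv : IsReg v) {C : ℝ}
    (hfwd : ∀ i, ‖edge v i‖⁻¹ ≤ C) (hbwd : ∀ i, ((‖edge v i‖ + ‖edge v (i - 1)‖) / 2)⁻¹ ≤ C)
    (hh : ∀ j, ‖h j‖ ≤ 1) (hk : ∀ j, ‖k j‖ ≤ 1) :
    |gMet m v h k| ≤ n * (1 + (2 * C * len v) ^ (2 * m)) / len v ^ 2 := by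
  have hL := len_pos hv
  have hzpow : len v ^ ((3 : ℤ) - 2 * m) = len v ^ 3 / len v ^ (2 * m) := by
    rw [zpow_sub₀ hL.ne']
    norm_cast
  have hterm : ∀ i, |⟪h i, k i⟫_ℝ / len v ^ 3 * ((‖edge v i‖ + ‖edge v (i - 1)‖) / 2)
      + ⟪Ds v h m i, Ds v k m i⟫_ℝ / len v ^ ((3 : ℤ) - 2 * (m : ℤ)) * mu v m i|
      ≤ (1 + (2 * C * len v) ^ (2 * m)) / len v ^ 2 := by
    intro i
    have hinner : |⟪h i, k i⟫_ℝ| ≤ 1 :=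
      (abs_real_inner_le_norm _ _).trans (mul_le_one₀ (hh i) (norm_nonneg _) (hk i))
    have hinnerDs := abs_inner_Ds_le hh hk hfwd hbwd m i
    calc _ ≤ |⟪h i, k i⟫_ℝ / len v ^ 3 * ((‖edge v i‖ + ‖edge v (i - 1)‖) / 2)|
          + |⟪Ds v h m i, Ds v k m i⟫_ℝ / len v ^ ((3 : ℤ) - 2 * (m : ℤ)) * mu v m i| :=
          abs_add_le _ _
      _ ≤ 1 / len v ^ 3 * len v + (2 * C) ^ (2 * m) / (len v ^ 3 / len v ^ (2 * m)) * len v := by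
          have havg : (0 : ℝ) ≤ (‖edge v i‖ + ‖edge v (i - 1)‖) / 2 := by positivity
          rw [hzpow, abs_mul, abs_mul, abs_of_nonneg havg, abs_of_nonneg (mu_nonneg v m i),
            abs_div, abs_div, abs_of_pos (by positivity : 0 < len v ^ 3),
            abs_of_pos (by positivity : 0 < len v ^ 3 / len v ^ (2 * m))]
          gcongr
          exacts [avg_edge_le_len v i, mu_nonneg v m i,
            div_nonneg ((abs_nonneg _).trans hinnerDs) (by positivity), mu_le_len v m i]
      _ = (1 + (2 * C * len v) ^ (2 * m)) / len v ^ 2 := by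
          field_simp
          ring
  calc |gMet m v h k| ≤ _ := Finset.abs_sum_le_sum_abs _ _
    _ ≤ ∑ _i : ZMod n, (1 + (2 * C * len v) ^ (2 * m)) / len v ^ 2 :=
        Finset.sum_le_sum fun i _ => hterm i
    _ = n * (1 + (2 * C * len v) ^ (2 * m)) / len v ^ 2 := by
        rw [Finset.sum_const, Finset.card_univ, ZMod.card, nsmul_eq_mul, mul_div_assoc]

def invEdgeSum (w : ZMod n → ℝ) : ℝ := ∑ i, ((w i)⁻¹ + 2 * (w i + w (i - 1))⁻¹)

def entryBound (m : ℕ) (w : ZMod n → ℝ) : ℝ :=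
  n * (1 + (2 * invEdgeSum w * ∑ i, w i) ^ (2 * m)) / (∑ i, w i) ^ 2

lemma inv_le_invEdgeSum {w : ZMod n → ℝ} (hw : ∀ i, 0 ≤ w i) (i : ZMod n) :
    (w i)⁻¹ ≤ invEdgeSum w ∧ ((w i + w (i - 1)) / 2)⁻¹ ≤ invEdgeSum w := by
  have hterm : ∀ j, 0 ≤ (w j)⁻¹ ∧ 0 ≤ 2 * (w j + w (j - 1))⁻¹ := fun j =>
    ⟨inv_nonneg.2 (hw j), by have := hw j; have := hw (j - 1); positivity⟩
  have hle : (w i)⁻¹ + 2 * (w i + w (i - 1))⁻¹ ≤ invEdgeSum w :=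
    Finset.single_le_sum (f := fun j => (w j)⁻¹ + 2 * (w j + w (j - 1))⁻¹)
      (fun j _ => add_nonneg (hterm j).1 (hterm j).2) (Finset.mem_univ i)
  rw [inv_div, div_eq_mul_inv]
  constructor <;> linarith [hterm i]

lemma abs_metricMatrix_le (m : ℕ) {v : ZMod n → Vec d} (hv : IsReg v) (p q : Fin d × ZMod n) :
    |metricMatrix m v p q| ≤ entryBound m (fun i => ‖edge v i‖) :=
  have hinv := inv_le_invEdgeSum (fun i => norm_nonneg (edge v i))
  abs_gMet_le hv (fun i => (hinv i).1) (fun i => (hinv i).2) (norm_stdB_le _ _) (norm_stdB_le _ _)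

lemma det_metricMatrix_le (m : ℕ) {v : ZMod n → Vec d} (hv : IsReg v) :
    (metricMatrix m v).det ≤ (Fintype.card (Fin d × ZMod n)).factorial *
      entryBound m (fun i => ‖edge v i‖) ^ Fintype.card (Fin d × ZMod n) := by
  have hdet := Matrix.det_le (abv := AbsoluteValue.abs) (abs_metricMatrix_le m hv)
  rw [nsmul_eq_mul] at hdet
  exact (le_abs_self _).trans hdet

end Metric

lemma Submonoid.exists_fin_prod_of_mem_closure {M : Type*} [CommMonoid M] {s : Set M} {x : M}
    (hx : x ∈ Submonoid.closure s) : ∃ (k : ℕ) (F : Fin k → M), x = ∏ j, F j ∧ ∀ j, F j ∈ s := by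
  obtain ⟨l, hl, rfl⟩ := Submonoid.exists_list_of_mem_closure hx
  exact ⟨l.length, l.get, by rw [← List.prod_ofFn, List.ofFn_get], fun j => hl _ (List.get_mem _ _)⟩

section EdgeRational

open MvPolynomial

variable [NeZero n]

variable (n) in
def edgeFactors : Set (MvPolynomial (ZMod n) ℝ) :=
  {F | (∃ i, F = X i) ∨ (∃ i, F = X i + X (i - 1)) ∨ F = ∑ i, X i}

variable (n) in
abbrev edgeDenominators : Submonoid (MvPolynomial (ZMod n) ℝ) :=
  Submonoid.closure (edgeFactors n)

lemma eval_pos_of_mem_edgeDenominators {Q : MvPolynomial (ZMod n) ℝ} (hQ : Q ∈ edgeDenominators n)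
    {w : ZMod n → ℝ} (hw : ∀ i, 0 < w i) : 0 < eval w Q := by
  induction hQ using Submonoid.closure_induction with
  | mem F hF =>
    rcases hF with ⟨i, rfl⟩ | ⟨i, rfl⟩ | rfl
    · simpa using hw i
    · simpa using add_pos (hw i) (hw (i - 1))
    · simpa using Finset.sum_pos (fun i _ => hw i) Finset.univ_nonempty
  | one => simp
  | mul P Q _ _ hP hQ => simpa using mul_pos hP hQ

/-- Equality is asked only at positive arguments, where every denominator is nonzero: this is
what makes the class closed under addition. -/
def IsEdgeRational (f : (ZMod n → ℝ) → ℝ) : Prop :=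
  ∃ P, ∃ Q ∈ edgeDenominators n, ∀ w : ZMod n → ℝ, (∀ i, 0 < w i) → f w = eval w P / eval w Q

lemma isEdgeRational_eval (P : MvPolynomial (ZMod n) ℝ) : IsEdgeRational fun w => eval w P :=
  ⟨P, 1, one_mem _, fun w _ => by simp⟩

lemma isEdgeRational_inv_eval {Q : MvPolynomial (ZMod n) ℝ} (hQ : Q ∈ edgeDenominators n) :
    IsEdgeRational fun w => (eval w Q)⁻¹ :=
  ⟨1, Q, hQ, fun w _ => by simp⟩

namespace IsEdgeRational

lemma congr {f g : (ZMod n → ℝ) → ℝ} (hf : IsEdgeRational f) (hfg : ∀ w, f w = g w) :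
    IsEdgeRational g := by
  rwa [← funext hfg]

lemma add {f g : (ZMod n → ℝ) → ℝ} (hf : IsEdgeRational f) (hg : IsEdgeRational g) :
    IsEdgeRational (f + g) := by
  obtain ⟨P, Q, hQ, hf⟩ := hf
  obtain ⟨P', Q', hQ', hg⟩ := hg
  refine ⟨P * Q' + P' * Q, Q * Q', mul_mem hQ hQ', fun w hw => ?_⟩
  have := (eval_pos_of_mem_edgeDenominators hQ hw).ne'
  have := (eval_pos_of_mem_edgeDenominators hQ' hw).ne'
  rw [Pi.add_apply, hf w hw, hg w hw]
  simp only [map_add, map_mul]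
  field_simp

lemma mul {f g : (ZMod n → ℝ) → ℝ} (hf : IsEdgeRational f) (hg : IsEdgeRational g) :
    IsEdgeRational (f * g) := by
  obtain ⟨P, Q, hQ, hf⟩ := hf
  obtain ⟨P', Q', hQ', hg⟩ := hg
  refine ⟨P * P', Q * Q', mul_mem hQ hQ', fun w hw => ?_⟩
  rw [Pi.mul_apply, hf w hw, hg w hw, map_mul, map_mul, mul_div_mul_comm]

lemma pow {f : (ZMod n → ℝ) → ℝ} (hf : IsEdgeRational f) (k : ℕ) : IsEdgeRational (f ^ k) := by
  induction k with
  | zero => exact (isEdgeRational_eval 1).congr fun w => by simp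
  | succ k ih => rw [pow_succ]; exact ih.mul hf

lemma sum {ι : Type*} (s : Finset ι) {f : ι → (ZMod n → ℝ) → ℝ}
    (hf : ∀ i ∈ s, IsEdgeRational (f i)) : IsEdgeRational (∑ i ∈ s, f i) := by
  classical
  induction s using Finset.induction_on with
  | empty => exact (isEdgeRational_eval 0).congr fun w => by simp
  | insert i s hi ih =>
    rw [Finset.sum_insert hi]
    exact (hf i (Finset.mem_insert_self i s)).add
      (ih fun j hj => hf j (Finset.mem_insert_of_mem hj))

end IsEdgeRational

lemma isEdgeRational_invEdgeSum : IsEdgeRational (invEdgeSum (n := n)) := by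
  have hsum := IsEdgeRational.sum (Finset.univ : Finset (ZMod n)) fun i _ =>
    (isEdgeRational_inv_eval (Submonoid.subset_closure (Or.inl ⟨i, rfl⟩))).add
      ((isEdgeRational_eval (C 2)).mul
        (isEdgeRational_inv_eval (Submonoid.subset_closure (Or.inr (Or.inl ⟨i, rfl⟩)))))
  exact hsum.congr fun w => by simp [invEdgeSum]

lemma isEdgeRational_entryBound (m : ℕ) : IsEdgeRational (entryBound (n := n) m) := by
  have hlen : (∑ i, X i : MvPolynomial (ZMod n) ℝ) ∈ edgeDenominators n :=
    Submonoid.subset_closure (Or.inr (Or.inr rfl))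
  have hscaled := ((isEdgeRational_eval (C 2)).mul isEdgeRational_invEdgeSum).mul
    (isEdgeRational_eval (∑ i : ZMod n, X i))
  have hbound := ((isEdgeRational_eval (C (n : ℝ))).mul
    ((isEdgeRational_eval 1).add (hscaled.pow (2 * m)))).mul ((isEdgeRational_inv_eval hlen).pow 2)
  exact hbound.congr fun w => by simp [entryBound, div_eq_mul_inv]

end EdgeRational

theorem det_metricMatrix_le_rational_general (d n m : ℕ) [NeZero n] :
    ∃ (P Q : MvPolynomial (ZMod n) ℝ) (k : ℕ) (F : Fin k → MvPolynomial (ZMod n) ℝ),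
      Q = ∏ j, F j ∧
      (∀ j, (∃ i, F j = MvPolynomial.X i) ∨
            (∃ i, F j = MvPolynomial.X i + MvPolynomial.X (i - 1)) ∨
            F j = ∑ i, MvPolynomial.X i) ∧
      ∀ v : ZMod n → Vec d, IsReg v →
        0 < MvPolynomial.eval (fun i => ‖edge v i‖) Q ∧
        (metricMatrix m v).det ≤ MvPolynomial.eval (fun i => ‖edge v i‖) P /
          MvPolynomial.eval (fun i => ‖edge v i‖) Q := by
  obtain ⟨P, Q, hQ, hPQ⟩ :=
    (isEdgeRational_eval (MvPolynomial.C ((Fintype.card (Fin d × ZMod n)).factorial : ℝ))).mul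
      ((isEdgeRational_entryBound (n := n) m).pow (Fintype.card (Fin d × ZMod n)))
  obtain ⟨k, F, rfl, hF⟩ := Submonoid.exists_fin_prod_of_mem_closure hQ
  refine ⟨P, _, k, F, rfl, hF, fun v hv => ?_⟩
  have hw := norm_edge_pos hv
  refine ⟨eval_pos_of_mem_edgeDenominators hQ hw, ?_⟩
  rw [← hPQ _ hw]
  simpa using det_metricMatrix_le m hv

/-- Lemma 2.2: `det G^m(v)` is bounded above by a rational function of
the edge lengths whose denominator is a finite product of factors of the form `X i`,
`X i + X (i-1)`, or `X 0 + ⋯ + X (n-1)`, positive on the regular set. -/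
theorem det_metricMatrix_le_rational (d n m : ℕ) (hd : 2 ≤ d) (hn : 3 ≤ n) [NeZero n] :
    ∃ (P Q : MvPolynomial (ZMod n) ℝ) (k : ℕ) (F : Fin k → MvPolynomial (ZMod n) ℝ),
      Q = ∏ j, F j ∧
      (∀ j, (∃ i, F j = MvPolynomial.X i) ∨
            (∃ i, F j = MvPolynomial.X i + MvPolynomial.X (i - 1)) ∨
            F j = ∑ i, MvPolynomial.X i) ∧
      ∀ v : ZMod n → Vec d, IsReg v →
        0 < MvPolynomial.eval (fun i => ‖edge v i‖) Q ∧
        (metricMatrix m v).det ≤ MvPolynomial.eval (fun i => ‖edge v i‖) P /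
          MvPolynomial.eval (fun i => ‖edge v i‖) Q :=
  det_metricMatrix_le_rational_general d n m
end
end

section
/- Conformal factor of order 2 for the triangle space: for every v ∈ ℝ² \ {(1,0), (−1,0)} and every h ∈ ℝ², setting w = ((1,0), v, (−1,0)) ∈ ℝ_*^{2×3} and k = (0, h, 0) ∈ (ℝ²)^3, one has g^2_w(k, k) = f_2(v) · |h|², where f_2(v) = (|e_0(v)| + |e_1(v)|) / (2 l(v)³) + ( 2/(|e_0(v)|²(|e_0(v)| + 2)) + 2(|e_0(v)| + |e_1(v)|)/(|e_0(v)|²|e_1(v)|²) + 2/(|e_1(v)|²(|e_1(v)| + 2)) ) · l(v), with e_0(v) = v − (1,0), e_1(v) = (−1,0) − v, and l(v) = |e_0(v)| + |e_1(v)| + 2. -/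
open scoped InnerProductSpace BigOperators
open MeasureTheory Filter Topology

noncomputable section

variable {d n : ℕ}

/-- The point (1,0) ∈ ℝ². -/
def p₁ : Vec 2 := (WithLp.equiv 2 (Fin 2 → ℝ)).symm ![1, 0]

/-- The point (-1,0) ∈ ℝ². -/
def p₂ : Vec 2 := (WithLp.equiv 2 (Fin 2 → ℝ)).symm ![-1, 0]

/-- The triangle with vertices (1,0), v, (-1,0), as a discrete curve with 3 points. -/
def tri (v : Vec 2) : ZMod 3 → Vec 2 := fun i => if i = 0 then p₁ else if i = 1 then v else p₂

/-- The tangent vector (0, h, 0) to the space of triangles with two fixed vertices. -/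
def triTan (h : Vec 2) : ZMod 3 → Vec 2 := fun i => if i = 1 then h else 0

/-! The tangent vector `(0, h, 0)` has second derivatives `c_i • h` at the three vertices, with
`c_0 = 2/(|e₀|(|e₀|+2))`, `c_1 = -2/(|e₀||e₁|)`, `c_2 = 2/(|e₁|(|e₁|+2))`; weighting `c_i²` by the
dual edge length `μ_i` gives exactly the three summands of the bracket in `f₂`. -/

section SecondOrder

variable (v h : ZMod n → Vec d) (i : ZMod n)

theorem Ds_one : Ds v h 1 i = ‖edge v i‖⁻¹ • (h (i + 1) - h i) := rfl

theorem Ds_two :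
    Ds v h 2 i = ((‖edge v i‖ + ‖edge v (i - 1)‖) / 2)⁻¹ • (Ds v h 1 i - Ds v h 1 (i - 1)) :=
  rfl

theorem mu_two : mu v 2 i = (‖edge v i‖ + ‖edge v (i - 1)‖) / 2 := rfl

theorem gMet_two_self [NeZero n] :
    gMet 2 v h h = ∑ i, (‖h i‖ ^ 2 / len v ^ 3 + ‖Ds v h 2 i‖ ^ 2 * len v) *
      ((‖edge v i‖ + ‖edge v (i - 1)‖) / 2) := by
  simp only [gMet, mu_two, real_inner_self_eq_norm_sq]
  refine Finset.sum_congr rfl fun i _ => ?_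
  norm_num
  ring

end SecondOrder

theorem sum_zmod_three {M : Type*} [AddCommMonoid M] (f : ZMod 3 → M) :
    ∑ i, f i = f 0 + f 1 + f 2 :=
  Fin.sum_univ_three f

theorem norm_p₁_sub_p₂ : ‖p₁ - p₂‖ = 2 := by
  have : p₁ - p₂ = (WithLp.equiv 2 (Fin 2 → ℝ)).symm ![2, 0] := by
    ext i; fin_cases i <;> norm_num [p₁, p₂]
  simp [this, EuclideanSpace.norm_eq, Fin.sum_univ_two]

section Triangle

variable (v h : Vec 2)

theorem edge_tri_zero : edge (tri v) 0 = v - p₁ := rfl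

theorem edge_tri_one : edge (tri v) 1 = p₂ - v := rfl

theorem norm_edge_tri_two : ‖edge (tri v) 2‖ = 2 := norm_p₁_sub_p₂

theorem len_tri : len (tri v) = ‖v - p₁‖ + ‖p₂ - v‖ + 2 := by
  rw [len, sum_zmod_three, edge_tri_zero, edge_tri_one, norm_edge_tri_two]

theorem triTan_zero : triTan h 0 = 0 := rfl

theorem triTan_one : triTan h 1 = h := rfl

theorem triTan_two : triTan h 2 = 0 := rfl

theorem Ds_one_tri_zero : Ds (tri v) (triTan h) 1 0 = ‖v - p₁‖⁻¹ • h := by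
  rw [Ds_one, edge_tri_zero, show (0 : ZMod 3) + 1 = 1 from rfl, triTan_one, triTan_zero, sub_zero]

theorem Ds_one_tri_one : Ds (tri v) (triTan h) 1 1 = -(‖p₂ - v‖⁻¹ • h) := by
  rw [Ds_one, edge_tri_one, show (1 : ZMod 3) + 1 = 2 from rfl, triTan_two, triTan_one, zero_sub,
    smul_neg]

theorem Ds_one_tri_two : Ds (tri v) (triTan h) 1 2 = 0 := by
  rw [Ds_one, show (2 : ZMod 3) + 1 = 0 from rfl, triTan_zero, triTan_two, sub_zero, smul_zero]

theorem Ds_two_tri_zero :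
    Ds (tri v) (triTan h) 2 0 = (2 / (‖v - p₁‖ * (‖v - p₁‖ + 2))) • h := by
  rw [Ds_two, show (0 : ZMod 3) - 1 = 2 from rfl, Ds_one_tri_zero, Ds_one_tri_two,
    edge_tri_zero, norm_edge_tri_two]
  match_scalars
  field_simp

theorem Ds_two_tri_one (ha : ‖v - p₁‖ ≠ 0) (hb : ‖p₂ - v‖ ≠ 0) :
    Ds (tri v) (triTan h) 2 1 = (-2 / (‖v - p₁‖ * ‖p₂ - v‖)) • h := by
  rw [Ds_two, show (1 : ZMod 3) - 1 = 0 from rfl, Ds_one_tri_one, Ds_one_tri_zero,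
    edge_tri_one, edge_tri_zero]
  match_scalars
  field_simp
  ring

theorem Ds_two_tri_two :
    Ds (tri v) (triTan h) 2 2 = (2 / (‖p₂ - v‖ * (‖p₂ - v‖ + 2))) • h := by
  rw [Ds_two, show (2 : ZMod 3) - 1 = 1 from rfl, Ds_one_tri_two, Ds_one_tri_one,
    norm_edge_tri_two, edge_tri_one]
  match_scalars
  field_simp
  ring

end Triangle

/-- the restriction of `g²` to the space of triangles modulo rotation,
translation and scaling is conformal to the Euclidean metric, with conformal factor
`f₂(v) = (|e₀| + |e₁|)/(2 l³) + (2/(|e₀|²(|e₀|+2)) + 2(|e₀|+|e₁|)/(|e₀|²|e₁|²)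
+ 2/(|e₁|²(|e₁|+2))) l`. -/
theorem conformal_factor_order_two (v : Vec 2) (hv₁ : v ≠ p₁) (hv₂ : v ≠ p₂)
    (h : Vec 2) :
    gMet 2 (tri v) (triTan h) (triTan h) =
      ((‖v - p₁‖ + ‖p₂ - v‖) / (2 * (‖v - p₁‖ + ‖p₂ - v‖ + 2) ^ 3)
        + (2 / (‖v - p₁‖ ^ 2 * (‖v - p₁‖ + 2))
            + 2 * (‖v - p₁‖ + ‖p₂ - v‖) / (‖v - p₁‖ ^ 2 * ‖p₂ - v‖ ^ 2)
            + 2 / (‖p₂ - v‖ ^ 2 * (‖p₂ - v‖ + 2)))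
          * (‖v - p₁‖ + ‖p₂ - v‖ + 2)) * ‖h‖ ^ 2 := by
  have ha : ‖v - p₁‖ ≠ 0 := norm_ne_zero_iff.2 (sub_ne_zero.2 hv₁)
  have hb : ‖p₂ - v‖ ≠ 0 := norm_ne_zero_iff.2 (sub_ne_zero.2 hv₂.symm)
  rw [gMet_two_self, sum_zmod_three, len_tri, Ds_two_tri_zero, Ds_two_tri_one v h ha hb,
    Ds_two_tri_two]
  simp only [triTan_zero, triTan_one, triTan_two, edge_tri_zero, edge_tri_one, norm_edge_tri_two,
    show (0 : ZMod 3) - 1 = 2 from rfl, show (1 : ZMod 3) - 1 = 0 from rfl,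
    show (2 : ZMod 3) - 1 = 1 from rfl, norm_smul, norm_zero, Real.norm_eq_abs, mul_pow, sq_abs]
  field_simp
  ring
end
end
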